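/- arXiv:2102.01034 — 3 statements merged into one kernel-verified Lean document; each statement's English description precedes it below -/
import Mathlib

section
/- Every tournament on n ≥ 1 vertices contains a transitive subtournament (an induced acyclic subdigraph) on at least ⌊log₂ n⌋ + 1 vertices. -/
/-!
Pick a vertex `v` of `A`. The other vertices split into out- and in-neighbours of `v`, so one
class `B` has `|A| ≤ 2|B| + 1`. A transitive subset of `B`, extended by `v` (a source or a sink of
it), is transitive, so the invariant `|A| < 2 ^ |S|` passes from `B` to `A`; in this form the
bound needs no separate base case, and `⌊log₂ n⌋ + 1 ≤ |S|` is its logarithm.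
-/

/-- A digraph (given by its arc relation) is acyclic if no vertex lies on a directed cycle. -/
def DiAcyclic {V : Type*} (D : V → V → Prop) : Prop :=
  ∀ v : V, ¬ Relation.TransGen D v v

/-- The subdigraph induced on a set of vertices is acyclic. -/
def AcyclicOn {V : Type*} (D : V → V → Prop) (S : Set V) : Prop :=
  DiAcyclic (fun a b => a ∈ S ∧ b ∈ S ∧ D a b)

/-- A digraph is `k`-dicolourable if its vertices can be partitioned into `k`
classes each inducing an acyclic subdigraph. -/
def Dicolourable {V : Type*} (D : V → V → Prop) (k : ℕ) : Prop :=
  ∃ f : V → Fin k, ∀ i : Fin k, AcyclicOn D {v | f v = i}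

/-- The dichromatic number. -/
noncomputable def dichi {V : Type*} (D : V → V → Prop) : ℕ :=
  sInf {k | Dicolourable D k}

/-- A digraph is `k`-dicritical if its dichromatic number is `k` and every proper
subdigraph (obtained by deleting vertices and/or arcs) has dichromatic number `< k`. -/
def Dicritical {V : Type*} (D : V → V → Prop) (k : ℕ) : Prop :=
  dichi D = k ∧
    ∀ (S : Set V) (R : V → V → Prop),
      (∀ a b, R a b → a ∈ S ∧ b ∈ S ∧ D a b) →
      ¬(S = Set.univ ∧ R = D) → dichi R < k

/-- An oriented graph: a digraph with no loops and no digons. -/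
def OrientedGraph {V : Type*} (D : V → V → Prop) : Prop :=
  ∀ a b, D a b → ¬ D b a

/-- A tournament: an oriented graph with exactly one arc between any two distinct vertices. -/
def IsTournament {V : Type*} (D : V → V → Prop) : Prop :=
  OrientedGraph D ∧ ∀ a b : V, a ≠ b → D a b ∨ D b a

/-- Out-degree of a vertex. -/
noncomputable def outDeg {V : Type*} (D : V → V → Prop) (v : V) : ℕ :=
  Nat.card {w | D v w}

/-- In-degree of a vertex. -/
noncomputable def inDeg {V : Type*} (D : V → V → Prop) (v : V) : ℕ :=
  Nat.card {w | D w v}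

/-- Number of arcs. -/
noncomputable def numArcs {V : Type*} (D : V → V → Prop) : ℕ :=
  Nat.card {p : V × V | D p.1 p.2}

open Finset Function Relation

section

variable {V : Type*} {D : V → V → Prop}

lemma OrientedGraph.irrefl (hO : OrientedGraph D) (v : V) : ¬ D v v :=
  fun h => hO v v h h

lemma IsTournament.swap (hT : IsTournament D) : IsTournament (swap D) :=
  ⟨fun a b hab hba => hT.1 b a hab hba, fun a b hab => (hT.2 a b hab).symm⟩

lemma acyclicOn_swap_iff {S : Set V} : AcyclicOn (swap D) S ↔ AcyclicOn D S := by
  have hind : (fun a b => a ∈ S ∧ b ∈ S ∧ swap D a b) =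
      swap (fun a b => a ∈ S ∧ b ∈ S ∧ D a b) := by
    funext a b
    exact propext (by simp only [swap]; tauto)
  exact forall_congr' fun v => by rw [hind, transGen_swap]

lemma acyclicOn_empty : AcyclicOn D ∅ := fun v hv => by
  obtain ⟨b, hvb, -⟩ := TransGen.head'_iff.mp hv
  exact hvb.1

lemma AcyclicOn.insert_of_forall_not_rel {S : Set V} {v : V} (hS : AcyclicOn D S)
    (hv : ∀ u ∈ insert v S, ¬ D u v) : AcyclicOn D (insert v S) := by
  -- no arc enters `v`, so a path can visit `v` only at its start
  have hpath : ∀ a b, TransGen (fun a b => a ∈ insert v S ∧ b ∈ insert v S ∧ D a b) a b →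
      b ≠ v ∧ (a = v ∨ TransGen (fun a b => a ∈ S ∧ b ∈ S ∧ D a b) a b) := by
    intro a b hab
    induction hab with
    | @single b h =>
      obtain ⟨ha, hb, hab⟩ := h
      have hbv : b ≠ v := by rintro rfl; exact hv a ha hab
      have hbS : b ∈ S := hb.resolve_left hbv
      refine ⟨hbv, ha.imp_right fun haS => .single ⟨haS, hbS, hab⟩⟩
    | @tail b c _ h ih =>
      obtain ⟨hb, hc, hbc⟩ := h
      have hcv : c ≠ v := by rintro rfl; exact hv b hb hbc
      have hbS : b ∈ S := hb.resolve_left ih.1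
      have hcS : c ∈ S := hc.resolve_left hcv
      exact ⟨hcv, ih.2.imp_right fun hab => hab.tail ⟨hbS, hcS, hbc⟩⟩
  intro u hu
  obtain ⟨hne, rfl | hcyc⟩ := hpath u u hu
  · exact hne rfl
  · exact hS u hcyc

lemma IsTournament.exists_subset_erase_forall_rel [DecidableEq V] (hT : IsTournament D)
    (A : Finset V) (v : V) :
    ∃ B ⊆ A.erase v, #A ≤ 2 * #B + 1 ∧ ((∀ t ∈ B, D v t) ∨ ∀ t ∈ B, D t v) := by
  classical
  set Out := (A.erase v).filter (D v)
  set In := (A.erase v).filter fun t => ¬ D v t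
  have hsum : #Out + #In = #(A.erase v) := card_filter_add_card_filter_not _
  have hA : #A - 1 ≤ #(A.erase v) := pred_card_le_card_erase
  rcases le_total #In #Out with hle | hle
  · refine ⟨Out, filter_subset _ _, by omega, .inl fun t ht => (mem_filter.mp ht).2⟩
  · refine ⟨In, filter_subset _ _, by omega, .inr fun t ht => ?_⟩
    obtain ⟨htv, -⟩ := mem_erase.mp (mem_filter.mp ht).1
    exact (hT.2 t v htv).resolve_right (mem_filter.mp ht).2

theorem IsTournament.exists_acyclicOn_card_lt_two_pow (hT : IsTournament D) (A : Finset V) :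
    ∃ S ⊆ A, AcyclicOn D (S : Set V) ∧ #A < 2 ^ #S := by
  classical
  induction A using Finset.strongInduction generalizing D with
  | H A ih =>
  rcases A.eq_empty_or_nonempty with rfl | ⟨v, hv⟩
  · exact ⟨∅, empty_subset _, coe_empty (α := V) ▸ acyclicOn_empty, by simp⟩
  obtain ⟨B, hBA, hcard, hdom⟩ := hT.exists_subset_erase_forall_rel A v
  wlog hout : ∀ t ∈ B, D v t generalizing D
  · -- reversing every arc turns the in-neighbour case into the out-neighbour case
    obtain ⟨S, hSA, hS, hlt⟩ := this hT.swap hdom.symm (hdom.resolve_left hout)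
    exact ⟨S, hSA, acyclicOn_swap_iff.mp hS, hlt⟩
  obtain ⟨S, hSB, hS, hlt⟩ := ih B (hBA.trans_ssubset (erase_ssubset hv)) hT
  have hvS : v ∉ S := fun h => (notMem_erase v A) (hBA (hSB h))
  refine ⟨insert v S, insert_subset hv (hSB.trans (hBA.trans (erase_subset v A))), ?_, ?_⟩
  · rw [coe_insert]
    refine hS.insert_of_forall_not_rel fun u hu huv => ?_
    rcases hu with rfl | hu
    · exact hT.1.irrefl u huv
    · exact hT.1 v u (hout u (hSB hu)) huv
  · rw [card_insert_of_notMem hvS, pow_succ]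
    omega

end

/-- Every tournament on `n ≥ 1` vertices contains a transitive (acyclic induced)
subtournament on at least `⌊log₂ n⌋ + 1` vertices. -/
theorem tournament_transitive_sub {V : Type*} [Fintype V] (D : V → V → Prop)
    (hT : IsTournament D) (hn : 1 ≤ Fintype.card V) :
    ∃ S : Finset V, AcyclicOn D (S : Set V) ∧
      Nat.log 2 (Fintype.card V) + 1 ≤ S.card := by
  obtain ⟨S, -, hS, hlt⟩ := hT.exists_acyclicOn_card_lt_two_pow univ
  exact ⟨S, hS, Nat.log_lt_of_lt_pow (by omega) hlt⟩
end

section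
/- Every directed cactus is 2-dicolourable. -/
/-- A subgraph is non-separable if it is connected and stays connected after
deleting any single vertex. -/
def IsNonseparable {V : Type*} {G : SimpleGraph V} (H : G.Subgraph) : Prop :=
  H.Connected ∧ ∀ v ∈ H.verts, (H.deleteVerts {v}).Connected

/-- A block: a maximal non-separable subgraph. -/
def IsBlock {V : Type*} {G : SimpleGraph V} (H : G.Subgraph) : Prop :=
  IsNonseparable H ∧ ∀ H' : G.Subgraph, IsNonseparable H' → H ≤ H' → H = H'

/-- The subgraph is a cycle. -/
def IsCycleSubgraph {V : Type*} {G : SimpleGraph V} (H : G.Subgraph) : Prop :=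
  ∃ (v : V) (w : G.Walk v v), w.IsCycle ∧ H = w.toSubgraph

/-- The subgraph is a single edge. -/
def IsEdgeSubgraph {V : Type*} {G : SimpleGraph V} (H : G.Subgraph) : Prop :=
  ∃ (u v : V) (h : G.Adj u v), H = G.subgraphOfAdj h

/-- A cactus: a graph each of whose blocks is a cycle or a single edge. -/
def IsCactus {V : Type*} (G : SimpleGraph V) : Prop :=
  ∀ H : G.Subgraph, IsBlock H → IsCycleSubgraph H ∨ IsEdgeSubgraph H

/-- The block `H` of the underlying graph of the digraph `D` is a single arc. -/
def IsSingleArcBlock {V : Type*} (D : V → V → Prop)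
    (H : (SimpleGraph.fromRel D).Subgraph) : Prop :=
  ∃ (u v : V) (h : (SimpleGraph.fromRel D).Adj u v),
    H = (SimpleGraph.fromRel D).subgraphOfAdj h ∧ Xor' (D u v) (D v u)

/-- The block `H` is a directed cycle: it is a cycle of the underlying graph in which
every vertex has exactly one out-neighbour and one in-neighbour. -/
def IsDirCycleBlock {V : Type*} (D : V → V → Prop)
    (H : (SimpleGraph.fromRel D).Subgraph) : Prop :=
  IsCycleSubgraph H ∧
    ∀ v ∈ H.verts, Nat.card {w | H.Adj v w ∧ D v w} = 1 ∧
      Nat.card {w | H.Adj v w ∧ D w v} = 1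

/-- The block `H` is a bidirected odd cycle. -/
def IsBidirOddCycleBlock {V : Type*} (D : V → V → Prop)
    (H : (SimpleGraph.fromRel D).Subgraph) : Prop :=
  (∃ (v : V) (w : (SimpleGraph.fromRel D).Walk v v),
      w.IsCycle ∧ Odd w.length ∧ H = w.toSubgraph) ∧
    ∀ a b, H.Adj a b → D a b ∧ D b a

/-- The block `H` is a bidirected complete graph. -/
def IsBidirCompleteBlock {V : Type*} (D : V → V → Prop)
    (H : (SimpleGraph.fromRel D).Subgraph) : Prop :=
  (∀ a ∈ H.verts, ∀ b ∈ H.verts, a ≠ b → H.Adj a b) ∧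
    ∀ a b, H.Adj a b → D a b ∧ D b a

/-- A directed cactus: an oriented graph each of whose blocks is a directed cycle
or a single arc. -/
def DirCactus {V : Type*} (D : V → V → Prop) : Prop :=
  OrientedGraph D ∧
    ∀ H : (SimpleGraph.fromRel D).Subgraph, IsBlock H →
      IsSingleArcBlock D H ∨ IsDirCycleBlock D H

/-!
Colour every vertex by the parity of its distance, in the underlying graph, from a fixed root of
its component. A directed cycle inside one colour class yields a cycle `C` of the underlying graph
along which adjacent vertices have distances of equal parity, hence equal distances. For an edge
`xy` of `C`, shortest paths from the root to `x` and to `y` then meet `C` only at their ends, so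
they give a path from `x` to `y` which avoids the rest of `C` and closes up with `C - xy` into a
second cycle. Both cycles lie in one block, which is a directed cycle, yet `x` has three
neighbours in their union.
-/

namespace SimpleGraph

variable {V : Type*}

theorem exists_isCycle_fromRel_of_transGen {R : V → V → Prop} (hR : ∀ a b, R a b → ¬ R b a)
    {v : V} (h : Relation.TransGen R v v) : ∃ (u : V) (c : (fromRel R).Walk u u), c.IsCycle := by
  obtain ⟨w, hvw, hwv⟩ := Relation.TransGen.head'_iff.mp h
  have hadj : (fromRel R).Adj v w :=
    (fromRel_adj _ _ _).mpr ⟨fun hvw' => hR v v (hvw' ▸ hvw) (hvw' ▸ hvw), Or.inl hvw⟩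
  -- A step of the chain back to `v` that uses the arc `v → w` starts at `v` itself.
  have hreach : ∀ a, Relation.ReflTransGen R a v →
      ((fromRel R).deleteEdges {s(v, w)}).Reachable a v := by
    intro a ha
    induction ha using Relation.ReflTransGen.head_induction_on with
    | refl => rfl
    | @head a b hab _ ih =>
      by_cases he : s(a, b) = s(v, w)
      · rcases Sym2.eq_iff.mp he with ⟨rfl, -⟩ | ⟨rfl, rfl⟩
        · rfl
        · exact absurd hab (hR _ _ hvw)
      · refine Adj.reachable ?_ |>.trans ih
        refine deleteEdges_adj.mpr ⟨(fromRel_adj _ _ _).mpr ⟨?_, Or.inl hab⟩, he⟩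
        exact fun hab' => hR a a (hab' ▸ hab) (hab' ▸ hab)
  obtain ⟨u, c, hc, -⟩ :=
    adj_and_reachable_delete_edges_iff_exists_cycle.mp ⟨hadj, (hreach w hwv).symm⟩
  exact ⟨u, c, hc⟩

variable {G : SimpleGraph V}

theorem Adj.dist_eq_of_mod_two_eq {r v w : V} (hadj : G.Adj v w)
    (h : G.dist r v % 2 = G.dist r w % 2) : G.dist r v = G.dist r w := by
  rcases hadj.diff_dist_adj (u := r) with h' | h' | h' <;> omega

theorem Walk.dist_eq_of_forall_mod_two_eq {r a b : V} (p : G.Walk a b)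
    (h : ∀ v ∈ p.support, G.dist r v % 2 = G.dist r a % 2) :
    ∀ v ∈ p.support, G.dist r v = G.dist r a := by
  induction p with
  | nil => simp
  | @cons a c b hadj p ih =>
    have hca : G.dist r c = G.dist r a :=
      (hadj.dist_eq_of_mod_two_eq (h c (by simp)).symm).symm
    intro v hv
    rcases List.mem_cons.mp hv with rfl | hv
    · rfl
    · rw [ih (fun u hu => hca ▸ h u (List.mem_cons_of_mem _ hu)) v hv, hca]

theorem Walk.eq_of_length_eq_dist {r x u : V} (p : G.Walk r x) (hp : p.length = G.dist r x)
    (hu : u ∈ p.support) (hd : G.dist r u = G.dist r x) : u = x := by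
  classical
  have hsplit : (p.takeUntil u hu).length + (p.dropUntil u hu).length = p.length := by
    rw [← Walk.length_append, p.take_spec hu]
  have := G.dist_le (p.takeUntil u hu)
  exact (p.dropUntil u hu).eq_of_length_eq_zero (by omega)

theorem Walk.IsCycle.exists_isCycle_of_dist_eq [DecidableEq V] {r x y : V} {hxy : G.Adj x y}
    {p : G.Walk y x} (hc : (Walk.cons hxy p).IsCycle) (hr : G.Reachable r x)
    (hd : ∀ u ∈ p.support, G.dist r u = G.dist r x) :
    ∃ c : G.Walk x x, c.IsCycle ∧ y ∈ c.support ∧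
      ¬ c.toSubgraph.neighborSet x ⊆ (Walk.cons hxy p).toSubgraph.neighborSet x := by
  obtain ⟨hp, -⟩ := (Walk.cons_isCycle_iff p hxy).mp hc
  obtain ⟨Px, hPx⟩ := hr.exists_walk_length_eq_dist
  obtain ⟨Py, hPy⟩ := (hr.trans hxy.reachable).exists_walk_length_eq_dist
  have hPx_meet : ∀ u ∈ Px.support, u ∈ p.support → u = x := fun u hu hup =>
    Px.eq_of_length_eq_dist hPx hu (hd u hup)
  have hPy_meet : ∀ u ∈ Py.support, u ∈ p.support → u = y := fun u hu hup =>
    Py.eq_of_length_eq_dist hPy hu ((hd u hup).trans (hd y p.start_mem_support).symm)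
  set Q : G.Walk x y := (Px.reverse.append Py).bypass
  have hQ : Q.IsPath := Walk.bypass_isPath _
  have hQ_meet : ∀ u ∈ Q.support, u ∈ p.support → u = x ∨ u = y := by
    intro u hu hup
    have := Walk.support_bypass_subset_support _ hu
    rw [Walk.mem_support_append_iff, Walk.support_reverse, List.mem_reverse] at this
    exact this.imp (hPx_meet u · hup) (hPy_meet u · hup)
  have hQ_nil : ¬ Q.Nil := Walk.not_nil_of_ne hxy.ne
  have hQ_snd : Q.snd ≠ y := by
    intro hy
    have hQ_edge : s(x, Q.snd) ∈ Q.edges :=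
      Walk.adj_toSubgraph_iff_mem_edges.mp (Q.toSubgraph_adj_snd hQ_nil)
    rw [hy] at hQ_edge
    have hmem : s(x, y) ∈ Px.reverse.edges ++ Py.edges := by
      rw [← Walk.edges_append]
      exact Walk.edges_bypass_subset_edges _ hQ_edge
    rcases List.mem_append.mp hmem with h | h
    · rw [Walk.edges_reverse, List.mem_reverse] at h
      exact hxy.ne (hPx_meet y (Px.snd_mem_support_of_mem_edges h) p.start_mem_support).symm
    · exact hxy.ne (hPy_meet x (Py.fst_mem_support_of_mem_edges h) p.end_mem_support)
  refine ⟨Q.append p, hQ.isCycle_append hp ?_ (Or.inr ?_), ?_, ?_⟩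
  · intro u huQ hup
    rcases hQ_meet u (List.mem_of_mem_tail huQ) (List.mem_of_mem_tail hup) with rfl | rfl
    · exact (List.nodup_cons.mp (Q.cons_tail_support ▸ hQ.support_nodup)).1 huQ
    · exact (List.nodup_cons.mp (p.cons_tail_support ▸ hp.support_nodup)).1 hup
  · have := hc.three_le_length
    simp only [Walk.length_cons] at this
    omega
  · exact (Walk.mem_support_append_iff _ _).mpr (Or.inr p.start_mem_support)
  · intro hsub
    have hx_snd : Q.snd ∈ (Q.append p).toSubgraph.neighborSet x := by
      rw [Walk.toSubgraph_append]
      exact Or.inl (Q.toSubgraph_adj_snd hQ_nil)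
    have hadj : (Walk.cons hxy p).toSubgraph.Adj x Q.snd := hsub hx_snd
    have hmem := Walk.mem_support_of_adj_toSubgraph hadj.symm
    rw [Walk.support_cons, List.mem_cons] at hmem
    rcases hmem with h | h
    · exact (Q.adj_snd hQ_nil).ne h.symm
    · rcases hQ_meet _ (Q.getVert_mem_support 1) h with h' | h'
      · exact (Q.adj_snd hQ_nil).ne h'.symm
      · exact hQ_snd h'

end SimpleGraph

section Blocks

open SimpleGraph

variable {V : Type*} {G : SimpleGraph V}

theorem IsNonseparable.connected_deleteVerts {H : G.Subgraph} (hH : IsNonseparable H) (x : V) :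
    (H.deleteVerts {x}).Connected := by
  by_cases hx : x ∈ H.verts
  · exact hH.2 x hx
  · rw [← Subgraph.deleteVerts_inter_verts_set_right_eq, Set.singleton_inter_eq_empty.mpr hx,
      Subgraph.deleteVerts_empty]
    exact hH.1

theorem SimpleGraph.Subgraph.deleteVerts_sup (H K : G.Subgraph) (s : Set V) :
    (H ⊔ K).deleteVerts s = H.deleteVerts s ⊔ K.deleteVerts s := by
  ext a b
  · simp [Set.union_sdiff_distrib]
  · simp only [Subgraph.deleteVerts_adj, Subgraph.sup_adj, Subgraph.verts_sup, Set.mem_union]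
    grind [Subgraph.Adj.fst_mem, Subgraph.Adj.snd_mem]

theorem IsNonseparable.sup {H K : G.Subgraph} (hH : IsNonseparable H) (hK : IsNonseparable K)
    {u v : V} (huv : u ≠ v) (hu : u ∈ H.verts ∩ K.verts) (hv : v ∈ H.verts ∩ K.verts) :
    IsNonseparable (H ⊔ K) := by
  refine ⟨Subgraph.connected_sup hH.1.preconnected hK.1.preconnected ⟨u, hu⟩, fun x _ => ?_⟩
  obtain ⟨w, hw, hwx⟩ : ∃ w ∈ H.verts ∩ K.verts, w ≠ x := by
    by_cases hux : u = x
    · exact ⟨v, hv, hux ▸ huv.symm⟩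
    · exact ⟨u, hu, hux⟩
  rw [Subgraph.deleteVerts_sup]
  exact Subgraph.connected_sup (hH.connected_deleteVerts x).preconnected
    (hK.connected_deleteVerts x).preconnected ⟨w, ⟨hw.1, hwx⟩, ⟨hw.2, hwx⟩⟩

theorem exists_isBlock_le [Finite V] {H : G.Subgraph} (hH : IsNonseparable H) :
    ∃ B : G.Subgraph, IsBlock B ∧ H ≤ B := by
  obtain ⟨B, ⟨hB, hHB⟩, hmax⟩ :=
    Set.Finite.exists_maximalFor id {K : G.Subgraph | IsNonseparable K ∧ H ≤ K} (Set.toFinite _)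
      ⟨H, hH, le_rfl⟩
  exact ⟨B, ⟨hB, fun K hK hBK => le_antisymm hBK (hmax ⟨hK, hHB.trans hBK⟩ hBK)⟩, hHB⟩

theorem SimpleGraph.Walk.IsCycle.connected_toSubgraph_deleteVerts_start {x : V}
    {c : G.Walk x x} (hc : c.IsCycle) : (c.toSubgraph.deleteVerts {x}).Connected := by
  -- Removing `x` from the cycle leaves the path `c.tail.dropLast`.
  set q := c.tail.dropLast
  have htail : ¬ c.tail.Nil := by
    rw [Walk.not_nil_iff_lt_length, Walk.length_tail]
    have := hc.three_le_length
    omega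
  have hsupp : q.support ++ [x] = c.support.tail := by
    rw [Walk.support_dropLast_concat htail, Walk.support_tail_of_not_nil _ hc.not_nil]
  have hx : x ∉ q.support := by
    have := hc.support_nodup
    rw [← hsupp, List.nodup_append] at this
    exact fun hxq => this.2.2 x hxq x (List.mem_singleton_self x) rfl
  have hmem : ∀ v, v ∈ q.support → v ∈ c.support ∧ v ≠ x := fun v hv =>
    ⟨c.cons_tail_support ▸ List.mem_cons_of_mem _ (hsupp ▸ List.mem_append_left _ hv),
      fun h => hx (h ▸ hv)⟩
  refine Subgraph.Connected.mono' (fun a b hab => ?_) ?_ q.toSubgraph_connected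
  · have ha := hmem a (Walk.mem_support_of_adj_toSubgraph hab)
    have hb := hmem b (Walk.mem_support_of_adj_toSubgraph hab.symm)
    refine Subgraph.deleteVerts_adj.mpr ⟨c.mem_verts_toSubgraph.mpr ha.1, ha.2,
      c.mem_verts_toSubgraph.mpr hb.1, hb.2, ?_⟩
    rw [Walk.adj_toSubgraph_iff_mem_edges] at hab ⊢
    rw [Walk.edges_dropLast, Walk.edges_tail] at hab
    exact List.mem_of_mem_tail (List.mem_of_mem_dropLast hab)
  · ext v
    simp only [Walk.verts_toSubgraph, Subgraph.deleteVerts_verts, Set.mem_sdiff,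
      Set.mem_ofPred_eq, Set.mem_singleton_iff]
    refine ⟨hmem v, fun ⟨hv, hvx⟩ => ?_⟩
    rw [← c.cons_tail_support, ← hsupp] at hv
    simpa [hvx] using hv

theorem SimpleGraph.Walk.IsCycle.isNonseparable_toSubgraph {x : V} {c : G.Walk x x}
    (hc : c.IsCycle) : IsNonseparable c.toSubgraph := by
  classical
  refine ⟨c.toSubgraph_connected, fun v hv => ?_⟩
  rw [Walk.mem_verts_toSubgraph] at hv
  simpa using (hc.rotate hv).connected_toSubgraph_deleteVerts_start

theorem SimpleGraph.Walk.IsCycle.not_toSubgraph_le_subgraphOfAdj {x : V} {c : G.Walk x x}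
    (hc : c.IsCycle) {u v : V} (huv : G.Adj u v) : ¬ c.toSubgraph ≤ G.subgraphOfAdj huv := by
  intro hle
  have h₁ := hle.2 (c.toSubgraph_adj_snd hc.not_nil)
  have h₂ := hle.2 (c.toSubgraph_adj_penultimate hc.not_nil).symm
  simp only [subgraphOfAdj_adj] at h₁ h₂
  exact hc.snd_ne_penultimate (Sym2.congr_right.mp (h₁.symm.trans h₂))

end Blocks

section DirCactus

open SimpleGraph

variable {V : Type*} {D : V → V → Prop}

theorem OrientedGraph.exists_isCycle_of_not_acyclicOn (hD : OrientedGraph D) {S : Set V}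
    (h : ¬ AcyclicOn D S) :
    ∃ (x : V) (c : (fromRel D).Walk x x), c.IsCycle ∧ ∀ u ∈ c.support, u ∈ S := by
  simp only [AcyclicOn, DiAcyclic, not_forall, not_not] at h
  obtain ⟨v, hv⟩ := h
  obtain ⟨x, c, hc⟩ :=
    exists_isCycle_fromRel_of_transGen (fun a b hab hba => hD a b hab.2.2 hba.2.2) hv
  have hle : fromRel (fun a b => a ∈ S ∧ b ∈ S ∧ D a b) ≤ fromRel D :=
    fun a b hab => ⟨hab.1, hab.2.imp (·.2.2) (·.2.2)⟩
  refine ⟨x, c.mapLe hle, hc.mapLe hle, fun u hu => ?_⟩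
  rw [Walk.support_mapLe_eq_support] at hu
  obtain ⟨e, he, hue⟩ := (Walk.mem_support_iff_exists_mem_edges_of_not_nil hc.not_nil).mp hu
  induction e using Sym2.ind with
  | _ a b =>
    obtain ⟨-, hab | hab⟩ := c.adj_of_mem_edges he
    · rcases Sym2.mem_iff.mp hue with rfl | rfl
      exacts [hab.1, hab.2.1]
    · rcases Sym2.mem_iff.mp hue with rfl | rfl
      exacts [hab.2.1, hab.1]

/-- Both cycles lie in one block, which is itself a cycle. -/
theorem DirCactus.neighborSet_toSubgraph_subset [Finite V] (hD : DirCactus D) {u w a b : V}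
    {c₁ : (fromRel D).Walk u u} {c₂ : (fromRel D).Walk w w} (h₁ : c₁.IsCycle) (h₂ : c₂.IsCycle)
    (hab : a ≠ b) (ha : a ∈ c₁.support ∧ a ∈ c₂.support) (hb : b ∈ c₁.support ∧ b ∈ c₂.support)
    {v : V} (hv : v ∈ c₁.support) :
    c₂.toSubgraph.neighborSet v ⊆ c₁.toSubgraph.neighborSet v := by
  simp only [← Walk.mem_verts_toSubgraph] at ha hb hv
  obtain ⟨B, hB, hle⟩ :=
    exists_isBlock_le (h₁.isNonseparable_toSubgraph.sup h₂.isNonseparable_toSubgraph hab ha hb)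
  have h₁B : c₁.toSubgraph ≤ B := le_sup_left.trans hle
  have h₂B : c₂.toSubgraph ≤ B := le_sup_right.trans hle
  rcases hD.2 B hB with ⟨x, y, hxy, rfl, -⟩ | ⟨⟨z, c, hc, rfl⟩, -⟩
  · exact absurd h₁B (h₁.not_toSubgraph_le_subgraphOfAdj hxy)
  · have hvc : v ∈ c.support := c.mem_verts_toSubgraph.mp (h₁B.1 hv)
    have heq : c₁.toSubgraph.neighborSet v = c.toSubgraph.neighborSet v := by
      refine Set.eq_of_subset_of_ncard_le (Subgraph.neighborSet_subset_of_subgraph h₁B v) ?_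
        (c.finite_neighborSet_toSubgraph)
      rw [hc.ncard_neighborSet_toSubgraph_eq_two hvc,
        h₁.ncard_neighborSet_toSubgraph_eq_two (c₁.mem_verts_toSubgraph.mp hv)]
    rw [heq]
    exact Subgraph.neighborSet_subset_of_subgraph h₂B v

theorem DirCactus.false_of_isCycle_of_dist_mod_two_eq [Finite V] (hD : DirCactus D) {r x : V}
    {c : (fromRel D).Walk x x} (hc : c.IsCycle) (hr : (fromRel D).Reachable r x)
    (h : ∀ u ∈ c.support, (fromRel D).dist r u % 2 = (fromRel D).dist r x % 2) : False := by
  classical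
  have hd := c.dist_eq_of_forall_mod_two_eq h
  obtain ⟨y, hxy, p, rfl⟩ := Walk.not_nil_iff.mp hc.not_nil
  obtain ⟨c', hc', hy, hnsub⟩ :=
    hc.exists_isCycle_of_dist_eq hr fun u hu => hd u (List.mem_cons_of_mem _ hu)
  refine hnsub (hD.neighborSet_toSubgraph_subset hc hc' hxy.ne ?_ ?_ (Walk.start_mem_support _))
  · exact ⟨Walk.start_mem_support _, Walk.start_mem_support _⟩
  · exact ⟨List.mem_cons_of_mem _ p.start_mem_support, hy⟩

end DirCactus

/-- Every directed cactus is 2-dicolourable. -/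
theorem dirCactus_two_dicolourable {V : Type*} [Fintype V] (D : V → V → Prop)
    (hD : DirCactus D) : Dicolourable D 2 := by
  classical
  set G := SimpleGraph.fromRel D
  let root : V → V := fun v => (G.connectedComponentMk v).out
  refine ⟨fun v => ⟨G.dist (root v) v % 2, Nat.mod_lt _ two_pos⟩, fun i => ?_⟩
  by_contra hi
  obtain ⟨x, c, hc, hcol⟩ := hD.1.exists_isCycle_of_not_acyclicOn hi
  have hroot : ∀ u ∈ c.support, root u = root x := fun u hu =>
    congrArg Quot.out (SimpleGraph.ConnectedComponent.sound (c.takeUntil u hu).reachable).symm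
  refine hD.false_of_isCycle_of_dist_mod_two_eq hc (r := root x)
    (SimpleGraph.ConnectedComponent.exact (G.connectedComponentMk x).out_eq) fun u hu => ?_
  have hux := congrArg Fin.val ((hcol u hu).trans (hcol x c.start_mem_support).symm)
  simpa [hroot u hu] using hux
end

section
/- Suppose there exists an oriented graph on 12 vertices with no acyclic induced subdigraph of order 5 in which some vertex has out-degree at most 4. Then, assuming that the unique 12-vertex tournament with no transitive subtournament of order 5 is 5- or 6-out-regular (every vertex has out-degree 5 or 6), one obtains a contradiction; hence every oriented graph of order 12 with no acyclic induced subdigraph of order 5 has minimum out-degree at least 5 and minimum in-degree at least 5, and in particular at least 60 arcs. -/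
/-! Complete `D` to a tournament by orienting each non-adjacent pair so that the arc climbs in a
key `k`. Putting the chosen vertex at the top of the key keeps its out-neighbourhood unchanged,
and no new acyclic sets appear since acyclicity passes to subdigraphs. In-degrees follow by
reversing all arcs. -/

section

variable {V : Type*} {D : V → V → Prop}

theorem AcyclicOn.mono {T : V → V → Prop} (hDT : ∀ a b, D a b → T a b) {S : Set V}
    (hT : AcyclicOn T S) : AcyclicOn D S := fun v hv =>
  hT v (Relation.TransGen.mono (fun _ _ hab => ⟨hab.1, hab.2.1, hDT _ _ hab.2.2⟩) _ _ hv)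

theorem AcyclicOn.flip {S : Set V} (h : AcyclicOn D S) : AcyclicOn (flip D) S := fun v hv =>
  h v (Relation.transGen_swap.mp
    (Relation.TransGen.mono (fun _ _ hab => ⟨hab.2.1, hab.1, hab.2.2⟩) _ _ hv))

theorem OrientedGraph.flip (hD : OrientedGraph D) : OrientedGraph (flip D) :=
  fun a b hab hba => hD a b hba hab

theorem numArcs_eq_sum_outDeg [Fintype V] : numArcs D = ∑ v, outDeg D v := by
  classical
  have e : {p : V × V | D p.1 p.2} ≃ Σ v, {w | D v w} :=
    Equiv.subtypeProdEquivSigmaSubtype fun a b => D a b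
  rw [numArcs, Nat.card_congr e, Nat.card_eq_fintype_card, Fintype.card_sigma]
  exact Finset.sum_congr rfl fun v _ => Nat.card_eq_fintype_card.symm

variable {α : Type*} [LinearOrder α] {k : V → α}

def completeAlong (D : V → V → Prop) (k : V → α) : V → V → Prop :=
  fun a b => D a b ∨ (¬ D b a ∧ k a < k b)

theorem le_completeAlong {a b : V} (h : D a b) : completeAlong D k a b := Or.inl h

theorem OrientedGraph.isTournament_completeAlong (hD : OrientedGraph D) (hk : k.Injective) :
    IsTournament (completeAlong D k) := by
  refine ⟨?_, fun a b hab => ?_⟩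
  · rintro a b (hab | ⟨hba, hlt⟩) (hba' | ⟨hab', hlt'⟩)
    exacts [hD a b hab hba', hab' hab, hba hba', lt_asymm hlt hlt']
  · by_cases hab' : D a b
    · exact Or.inl (Or.inl hab')
    by_cases hba : D b a
    · exact Or.inr (Or.inl hba)
    rcases lt_or_gt_of_ne (hk.ne hab) with hlt | hlt
    exacts [Or.inl (Or.inr ⟨hba, hlt⟩), Or.inr (Or.inr ⟨hab', hlt⟩)]

theorem completeAlong_iff_of_isMax {v w : V} (hv : IsMax (k v)) :
    completeAlong D k v w ↔ D v w :=
  ⟨fun h => h.resolve_right fun ⟨_, hlt⟩ => hv.not_lt hlt, Or.inl⟩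

theorem OrientedGraph.exists_tournament_ge_outDeg_eq (hD : OrientedGraph D) (v : V) :
    ∃ T : V → V → Prop, IsTournament T ∧ (∀ a b, D a b → T a b) ∧ outDeg T v = outDeg D v := by
  classical
  let k : V → WithTop Cardinal := fun a => if a = v then ⊤ else embeddingToCardinal a
  have hk : k.Injective := by
    intro a b hab
    by_cases ha : a = v <;> by_cases hb : b = v <;> simp_all [k]
  have hv : IsMax (k v) := by simp [k]
  refine ⟨completeAlong D k, isTournament_completeAlong hD hk, fun _ _ => le_completeAlong, ?_⟩
  simp only [outDeg, completeAlong_iff_of_isMax hv]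

theorem OrientedGraph.le_outDeg_of_forall_tournament {n m : ℕ}
    (hT : ∀ T : V → V → Prop, IsTournament T →
      (¬ ∃ S : Finset V, S.card = n ∧ AcyclicOn T (S : Set V)) → ∀ v, m ≤ outDeg T v)
    (hD : OrientedGraph D) (hno : ¬ ∃ S : Finset V, S.card = n ∧ AcyclicOn D (S : Set V))
    (v : V) : m ≤ outDeg D v := by
  obtain ⟨T, hTour, hDT, hdeg⟩ := hD.exists_tournament_ge_outDeg_eq v
  rw [← hdeg]
  exact hT T hTour (fun ⟨S, hS, hac⟩ => hno ⟨S, hS, AcyclicOn.mono hDT hac⟩) v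

end

/-- Assuming every 12-vertex tournament with no transitive subtournament of order 5
has all out-degrees equal to 5 or 6, every oriented graph of order 12 with no acyclic
induced subdigraph of order 5 has minimum out-degree and minimum in-degree at least 5,
and in particular at least 60 arcs. -/
theorem twelve_vertex_min_degree {V : Type*} [Fintype V] (hV : Fintype.card V = 12)
    (hST : ∀ T : V → V → Prop, IsTournament T →
      (¬ ∃ S : Finset V, S.card = 5 ∧ AcyclicOn T (S : Set V)) →
      ∀ v : V, outDeg T v = 5 ∨ outDeg T v = 6)
    (D : V → V → Prop) (hor : OrientedGraph D)
    (hno : ¬ ∃ S : Finset V, S.card = 5 ∧ AcyclicOn D (S : Set V)) :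
    (∀ v : V, 5 ≤ outDeg D v ∧ 5 ≤ inDeg D v) ∧ 60 ≤ numArcs D := by
  have hdeg : ∀ E : V → V → Prop, OrientedGraph E →
      (¬ ∃ S : Finset V, S.card = 5 ∧ AcyclicOn E (S : Set V)) → ∀ v, 5 ≤ outDeg E v :=
    fun _ => OrientedGraph.le_outDeg_of_forall_tournament fun T hT hnoT v => by
      rcases hST T hT hnoT v with h | h <;> omega
  have hmin : ∀ v, 5 ≤ outDeg D v ∧ 5 ≤ inDeg D v := fun v =>
    ⟨hdeg D hor hno v, hdeg (flip D) hor.flip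
      (fun ⟨S, hS, hac⟩ => hno ⟨S, hS, hac.flip⟩) v⟩
  refine ⟨hmin, ?_⟩
  calc 60 = ∑ _v : V, 5 := by simp [hV]
    _ ≤ ∑ v, outDeg D v := Finset.sum_le_sum fun v _ => (hmin v).1
    _ = numArcs D := numArcs_eq_sum_outDeg.symm
end
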